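/- arXiv:2302.01797 — 3 statements merged into one kernel-verified Lean document; each statement's English description precedes it below -/
import Mathlib

section
/- Let A and B be symmetric invertible 3×3 matrices with det A = det B, suppose R·B − A = a ⊗ n for some R ∈ SO(3), a ∈ ℝ³, n ∈ ℝ³ with n ≠ 0, and suppose A·p_A = α·p_A and B·p_B = α·p_B for some α ∈ ℝ, α ≠ 0 and vectors p_A, p_B. Then (R·p_B − p_A) · (A⁻¹n) = 0 if and only if (p_B − p_A) · n = 0. -/
open Matrix

noncomputable section

abbrev M3 := Matrix (Fin 3) (Fin 3) ℝ
abbrev V3 := Fin 3 → ℝ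

def IsRot (R : M3) : Prop := Rᵀ * R = 1 ∧ R.det = 1

/-!
Write `u ⊗ v` for `vecMulVec u v`. By the matrix determinant lemma,
`det (A + a ⊗ n) = det A * (1 + n ⬝ A⁻¹ a)`, so the twinning equation `R B = A + a ⊗ n`
together with `det (R B) = det A` forces `n ⬝ A⁻¹ a = 0`. Applying `R B = A + a ⊗ n` to the
eigenvector `p_B` gives `α (R p_B - p_A) = A (p_B - p_A) + (n ⬝ p_B) a`; multiplying by the
symmetric matrix `A⁻¹` and pairing with `n` then yields
`α ((R p_B - p_A) ⬝ A⁻¹ n) = (p_B - p_A) ⬝ n`, and `α ≠ 0` finishes the proof.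
-/

namespace Matrix

variable {m K : Type*} [Fintype m] [CommRing K]

theorem smul_mulVec_sub_eq_of_mul_eq_add_vecMulVec {A B R : Matrix m m K} {a n pA pB : m → K}
    {α : K} (htwin : R * B = A + vecMulVec a n) (hpA : A *ᵥ pA = α • pA)
    (hpB : B *ᵥ pB = α • pB) :
    α • (R *ᵥ pB - pA) = A *ᵥ (pB - pA) + (n ⬝ᵥ pB) • a :=
  calc α • (R *ᵥ pB - pA) = (R * B) *ᵥ pB - A *ᵥ pA := by
        rw [← mulVec_mulVec, hpB, hpA, mulVec_smul, smul_sub]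
    _ = A *ᵥ (pB - pA) + (n ⬝ᵥ pB) • a := by
        rw [htwin, add_mulVec, vecMulVec_mulVec, mulVec_sub, op_smul_eq_smul]
        abel

variable [DecidableEq m]

theorem det_one_add_vecMulVec (u v : m → K) : (1 + vecMulVec u v).det = 1 + v ⬝ᵥ u := by
  rw [vecMulVec_eq Unit, det_one_add_replicateCol_mul_replicateRow]

theorem det_add_vecMulVec {A : Matrix m m K} (hA : IsUnit A.det) (u v : m → K) :
    (A + vecMulVec u v).det = A.det * (1 + v ⬝ᵥ A⁻¹ *ᵥ u) := by
  have hfactor : A + vecMulVec u v = A * (1 + vecMulVec (A⁻¹ *ᵥ u) v) := by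
    rw [Matrix.mul_add, Matrix.mul_one, mul_vecMulVec, mulVec_mulVec, mul_nonsing_inv A hA,
      one_mulVec]
  rw [hfactor, det_mul, det_one_add_vecMulVec]

theorem dotProduct_inv_mulVec_eq_zero_of_det_add_vecMulVec_eq {A : Matrix m m K}
    (hA : IsUnit A.det) {u v : m → K} (h : (A + vecMulVec u v).det = A.det) :
    v ⬝ᵥ A⁻¹ *ᵥ u = 0 := by
  rw [det_add_vecMulVec hA, hA.mul_eq_left] at h
  exact add_eq_left.mp h

theorem dotProduct_inv_mulVec_of_transpose_eq {A : Matrix m m K} (hA : Aᵀ = A) (x y : m → K) :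
    x ⬝ᵥ A⁻¹ *ᵥ y = (A⁻¹ *ᵥ x) ⬝ᵥ y := by
  rw [dotProduct_mulVec, ← mulVec_transpose, transpose_nonsing_inv, hA]

theorem mul_dotProduct_inv_mulVec_eq_of_mul_eq_add_vecMulVec {A B R : Matrix m m K}
    {a n pA pB : m → K} {α : K} (hAsymm : Aᵀ = A) (hA : IsUnit A.det)
    (htwin : R * B = A + vecMulVec a n) (hdet : (R * B).det = A.det)
    (hpA : A *ᵥ pA = α • pA) (hpB : B *ᵥ pB = α • pB) :
    α * ((R *ᵥ pB - pA) ⬝ᵥ A⁻¹ *ᵥ n) = (pB - pA) ⬝ᵥ n := by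
  have hna : n ⬝ᵥ A⁻¹ *ᵥ a = 0 :=
    dotProduct_inv_mulVec_eq_zero_of_det_add_vecMulVec_eq hA (htwin ▸ hdet)
  calc α * ((R *ᵥ pB - pA) ⬝ᵥ A⁻¹ *ᵥ n)
      = (A⁻¹ *ᵥ (α • (R *ᵥ pB - pA))) ⬝ᵥ n := by
        rw [dotProduct_inv_mulVec_of_transpose_eq hAsymm, mulVec_smul, smul_dotProduct,
          smul_eq_mul]
    _ = (pB - pA) ⬝ᵥ n + (n ⬝ᵥ pB) * (n ⬝ᵥ A⁻¹ *ᵥ a) := by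
        rw [smul_mulVec_sub_eq_of_mul_eq_add_vecMulVec htwin hpA hpB, mulVec_add, mulVec_mulVec,
          nonsing_inv_mul A hA, one_mulVec, mulVec_smul, add_dotProduct, smul_dotProduct,
          smul_eq_mul, dotProduct_comm (A⁻¹ *ᵥ a)]
    _ = (pB - pA) ⬝ᵥ n := by rw [hna, mul_zero, add_zero]

end Matrix

theorem pole_free_interface_equivalence_general
    (A B : M3) (hAsymm : Aᵀ = A)
    (hA : IsUnit A.det) (hdet : A.det = B.det)
    (R : M3) (a n : V3) (hR : IsRot R)
    (htwin : R * B - A = vecMulVec a n)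
    (α : ℝ) (hα : α ≠ 0) (pA pB : V3)
    (hpA : A *ᵥ pA = α • pA) (hpB : B *ᵥ pB = α • pB) :
    (R *ᵥ pB - pA) ⬝ᵥ (A⁻¹ *ᵥ n) = 0 ↔ (pB - pA) ⬝ᵥ n = 0 := by
  have hdetRB : (R * B).det = A.det := by rw [det_mul, hR.2, one_mul, hdet]
  rw [← mul_eq_zero_iff_left hα, mul_dotProduct_inv_mulVec_eq_of_mul_eq_add_vecMulVec hAsymm hA
    (sub_eq_iff_eq_add'.mp htwin) hdetRB hpA hpB]

/-- Lemma 6.1 of James–Kinderlehrer. -/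
theorem pole_free_interface_equivalence
    (A B : M3) (hAsymm : Aᵀ = A) (hBsymm : Bᵀ = B)
    (hA : IsUnit A.det) (hB : IsUnit B.det) (hdet : A.det = B.det)
    (R : M3) (a n : V3) (hR : IsRot R) (hn : n ≠ 0)
    (htwin : R * B - A = vecMulVec a n)
    (α : ℝ) (hα : α ≠ 0) (pA pB : V3)
    (hpA : A *ᵥ pA = α • pA) (hpB : B *ᵥ pB = α • pB) :
    (R *ᵥ pB - pA) ⬝ᵥ (A⁻¹ *ᵥ n) = 0 ↔ (pB - pA) ⬝ᵥ n = 0 :=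
  pole_free_interface_equivalence_general A B hAsymm hA hdet R a n hR htwin α hα pA pB hpA hpB
end
end

section
/- Let F₁ be an invertible 3×3 matrix, let Q₁ = Q_π(v₁), Q₂ = Q_π(v₂) be 180° rotations about orthogonal unit axes v₁ ⊥ v₂, and define F₂ = Q₁F₁Q₁, F₃ = Q₂F₂Q₂, F₄ = Q₂F₁Q₂. If each consecutive pair (F₁,F₂), (F₂,F₃), (F₃,F₄), (F₄,F₁) is rank-one connected, i.e., there exist Rᵢ ∈ SO(3), aᵢ ≠ 0, unit nᵢ with R₁F₂ − F₁ = a₁⊗n₁, R₂F₃ − F₂ = a₂⊗n₂, R₃F₄ − F₃ = a₃⊗n₃, R₄F₁ − F₄ = a₄⊗n₄, then the rotations can be chosen so that R₁R₂R₃R₄ = I and the four normals n₁, n₂, n₃, n₄ are coplanar (all orthogonal to a common nonzero vector). -/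
/-!
Write `W u` for the half-turn about the axis `u`. For a unit axis `e` and invertible `F`, the
Ball–James twin equation `R (Q F Q) - F = a ⊗ n`, `Q = Qπ(e)`, has the two explicit solutions
`R = W(F⁻ᵀe) Q, n = e` (type I) and `R = W(F e) Q, a ∥ F e, n ⊥ e` (type II). Neither degenerates
when `F` and `Q F Q` are rank-one connected at all: a vanishing `a` or `n` would make `e` an
eigenvector of `FᵀF`, so `Q F Q` would have the same Cauchy–Green tensor and determinant as `F`,
and then `R (Q F Q) F⁻¹ = 1 + a ⊗ F⁻ᵀn` would be a rotation, forcing `a ⊗ n = 0`.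

Use type I across `F₁ | F₂` (axis `v₁`) and type II across `F₂ | F₃` (axis `v₂`); the two
remaining interfaces are these solutions reversed and conjugated by `Q₂` resp. `Q₁`. All four
normals (`v₁`, `n₂`, `Q₂v₁`, `Q₁n₂`) are orthogonal to `v₂`. As `Q₁` and `Q₂` commute, the product
of the four rotations collapses to `(W(g) W(Q₁F₂v₂))²` with `g = F₁⁻ᵀv₁`, and `Q₁F₂v₂ = -F₁v₂` is
orthogonal to `g` because `g · F₁v₂ = v₁ · v₂ = 0`; half-turns about orthogonal axes commute, so
the square is `1`.
-/

open Matrix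

noncomputable section

def Qpi (v : V3) : M3 := (2 : ℝ) • vecMulVec v v - 1

section HalfTurn

variable {K ι : Type*} [Field K] [Fintype ι] [DecidableEq ι]

-- The half-turn about the axis `v` (equal to `Qpi v` for unit `v`); as `2 / 0 = 0`,
-- `halfTurn 0 = -1`.
def halfTurn (v : ι → K) : Matrix ι ι K := (2 / (v ⬝ᵥ v)) • vecMulVec v v - 1

lemma halfTurn_transpose (v : ι → K) : (halfTurn v)ᵀ = halfTurn v := by
  simp [halfTurn]

lemma halfTurn_mul_self (v : ι → K) : halfTurn v * halfTurn v = 1 := by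
  have key : (2 / (v ⬝ᵥ v)) * (2 / (v ⬝ᵥ v)) * (v ⬝ᵥ v) = 2 * (2 / (v ⬝ᵥ v)) := by
    rcases eq_or_ne (v ⬝ᵥ v) 0 with h | h
    · simp [h]
    · field_simp
  simp only [halfTurn, sub_mul, mul_sub, vecMulVec_mul_vecMulVec, vecMulVec_smul, smul_smul,
    Matrix.one_mul, Matrix.mul_one, mul_smul_comm, smul_mul_assoc]
  linear_combination (norm := module) key • vecMulVec v v

lemma halfTurn_commute {v w : ι → K} (h : v ⬝ᵥ w = 0) : Commute (halfTurn v) (halfTurn w) := by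
  have hvw : Commute (vecMulVec v v) (vecMulVec w w) := by
    rw [Commute, SemiconjBy, vecMulVec_mul_vecMulVec, vecMulVec_mul_vecMulVec, h,
      dotProduct_comm, h]
    simp
  exact (((hvw.smul_left _).smul_right _).sub_left (Commute.one_left _)).sub_right
    (Commute.one_right _)

lemma halfTurn_conj {Q : Matrix ι ι K} (hQ : Qᵀ * Q = 1) (v : ι → K) :
    Q * halfTurn v * Qᵀ = halfTurn (Q *ᵥ v) := by
  have hdot : (Q *ᵥ v) ⬝ᵥ (Q *ᵥ v) = v ⬝ᵥ v := by
    rw [dotProduct_mulVec, ← mulVec_transpose, mulVec_mulVec, hQ, one_mulVec]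
  rw [halfTurn, halfTurn, hdot, mul_sub, sub_mul, mul_smul_comm, smul_mul_assoc, mul_vecMulVec,
    vecMulVec_mul, vecMul_transpose, Matrix.mul_one, mul_eq_one_comm.mp hQ]

lemma commute_halfTurn_of_mulVec_eq_smul {C : Matrix ι ι K} (hC : C.IsSymm) {v : ι → K} {μ : K}
    (hv : C *ᵥ v = μ • v) : Commute C (halfTurn v) := by
  have : Commute C (vecMulVec v v) := by
    rw [Commute, SemiconjBy, mul_vecMulVec, vecMulVec_mul, ← mulVec_transpose, hC.eq, hv,
      smul_vecMulVec, vecMulVec_smul]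
  exact (this.smul_right _).sub_right (Commute.one_right _)

lemma det_halfTurn {v : Fin 3 → K} (hv : v ⬝ᵥ v ≠ 0) : (halfTurn v).det = 1 := by
  have h : (2 / (v ⬝ᵥ v)) * (v ⬝ᵥ v) = 2 := div_mul_cancel₀ _ hv
  simp only [dotProduct, Fin.sum_univ_three] at h
  simp [halfTurn, det_fin_three, vecMulVec_apply, one_apply, dotProduct, Fin.sum_univ_three]
  linear_combination h

end HalfTurn

section Involution

variable {M : Type*} [Monoid M] {P Q : M}

lemma conj_conj_of_mul_self_eq_one (hP : P * P = 1) (X : M) : P * (P * X * P) * P = X := by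
  simp only [mul_assoc, hP, mul_one, ← mul_assoc P P, one_mul]

lemma conj_conj_conj_of_commute (hP : P * P = 1) (hPQ : Commute P Q) (X : M) :
    P * (Q * (P * X * P) * Q) * P = Q * X * Q := by
  have hPQP : ∀ Y, P * (Q * (P * Y)) = Q * Y := fun Y => by
    rw [hPQ.left_comm, ← mul_assoc P P, hP, one_mul]
  have hPQP' : P * (Q * P) = Q := by simpa using hPQP 1
  simp only [mul_assoc, hPQP, hPQP']

lemma crossing_cycle_eq_sq (hQ : Q * Q = 1) (hPQ : Commute P Q) (A B : M) :
    A * P * (B * Q) * (Q * (P * A) * Q) * (P * (Q * B) * P) = (A * (P * B * P)) ^ 2 := by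
  have hQQ : ∀ Y, Q * (Q * Y) = Y := fun Y => by rw [← mul_assoc, hQ, one_mul]
  have hQPQ : ∀ Y, Q * (P * (Q * Y)) = P * Y := fun Y => by
    rw [hPQ.symm.left_comm, hQQ]
  simp only [sq, mul_assoc, hQQ, hQPQ]

end Involution

lemma det_conj_of_mul_self_eq_one {n R : Type*} [Fintype n] [DecidableEq n] [CommRing R]
    {Q : Matrix n n R} (hQ : Q * Q = 1) (F : Matrix n n R) : (Q * F * Q).det = F.det := by
  rw [det_mul, det_mul, mul_comm, ← mul_assoc, ← det_mul, hQ, det_one, one_mul]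

lemma inv_transpose_mulVec_dotProduct_mulVec {n R : Type*} [Fintype n] [DecidableEq n]
    [CommRing R] {F : Matrix n n R} (hF : IsUnit F.det) (x y : n → R) :
    (F⁻¹ᵀ *ᵥ x) ⬝ᵥ (F *ᵥ y) = x ⬝ᵥ y := by
  rw [dotProduct_mulVec, ← mulVec_transpose, mulVec_mulVec,
    ← transpose_mul, F.nonsing_inv_mul hF, transpose_one, one_mulVec]

lemma Qpi_eq_halfTurn {v : V3} (hv : v ⬝ᵥ v = 1) : Qpi v = halfTurn v := by
  rw [Qpi, halfTurn, hv, div_one]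

lemma Qpi_transpose (v : V3) : (Qpi v)ᵀ = Qpi v := by
  simp [Qpi]

lemma Qpi_mul_self {v : V3} (hv : v ⬝ᵥ v = 1) : Qpi v * Qpi v = 1 := by
  rw [Qpi_eq_halfTurn hv, halfTurn_mul_self]

lemma Qpi_transpose_mul_self {v : V3} (hv : v ⬝ᵥ v = 1) : (Qpi v)ᵀ * Qpi v = 1 := by
  rw [Qpi_transpose, Qpi_mul_self hv]

lemma Qpi_commute {v w : V3} (hv : v ⬝ᵥ v = 1) (hw : w ⬝ᵥ w = 1) (h : v ⬝ᵥ w = 0) :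
    Commute (Qpi v) (Qpi w) := by
  rw [Qpi_eq_halfTurn hv, Qpi_eq_halfTurn hw]
  exact halfTurn_commute h

lemma Qpi_mulVec_dotProduct (v x y : V3) : (Qpi v *ᵥ x) ⬝ᵥ y = x ⬝ᵥ (Qpi v *ᵥ y) := by
  rw [dotProduct_comm, dotProduct_mulVec, ← mulVec_transpose, Qpi_transpose, dotProduct_comm]

lemma Qpi_mulVec (v x : V3) : Qpi v *ᵥ x = (2 * (v ⬝ᵥ x)) • v - x := by
  simp [Qpi, sub_mulVec, smul_mulVec, vecMulVec_mulVec, smul_smul]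

lemma Qpi_mulVec_self {v : V3} (hv : v ⬝ᵥ v = 1) : Qpi v *ᵥ v = v := by
  rw [Qpi_mulVec, hv]
  module

lemma Qpi_mulVec_of_dotProduct_eq_zero {v x : V3} (h : v ⬝ᵥ x = 0) : Qpi v *ᵥ x = -x := by
  simp [Qpi_mulVec, h]

lemma IsRot.mul {A B : M3} (hA : IsRot A) (hB : IsRot B) : IsRot (A * B) := by
  refine ⟨?_, by rw [det_mul, hA.2, hB.2, one_mul]⟩
  rw [transpose_mul, Matrix.mul_assoc, ← Matrix.mul_assoc Aᵀ, hA.1, Matrix.one_mul, hB.1]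

lemma IsRot.transpose {A : M3} (hA : IsRot A) : IsRot Aᵀ :=
  ⟨by rw [transpose_transpose, mul_eq_one_comm.mp hA.1], by rw [det_transpose, hA.2]⟩

lemma IsRot.conj {R : M3} (hR : IsRot R) {Q : M3} (hQ : Qᵀ * Q = 1) : IsRot (Q * R * Qᵀ) := by
  have hQ' : Q * Qᵀ = 1 := mul_eq_one_comm.mp hQ
  refine ⟨?_, ?_⟩
  · simp only [transpose_mul, transpose_transpose, Matrix.mul_assoc]
    rw [← Matrix.mul_assoc Qᵀ Q, hQ, Matrix.one_mul, ← Matrix.mul_assoc Rᵀ, hR.1, Matrix.one_mul,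
      hQ']
  · rw [det_mul, det_mul, mul_comm, ← mul_assoc, ← det_mul, hQ, det_one, one_mul, hR.2]

lemma isRot_halfTurn {v : V3} (hv : v ≠ 0) : IsRot (halfTurn v) :=
  ⟨by rw [halfTurn_transpose, halfTurn_mul_self], det_halfTurn (dotProduct_self_eq_zero.not.mpr hv)⟩

lemma isRot_Qpi {v : V3} (hv : v ⬝ᵥ v = 1) : IsRot (Qpi v) := by
  rw [Qpi_eq_halfTurn hv]
  exact isRot_halfTurn fun h => by simp [h] at hv

lemma eq_zero_or_eq_zero_of_isRot_one_add_vecMulVec {a c : V3}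
    (h : IsRot (1 + vecMulVec a c)) : a = 0 ∨ c = 0 := by
  obtain ⟨horth, hdet⟩ := h
  have hca : c ⬝ᵥ a = 0 := by
    rw [vecMulVec_eq Unit, det_one_add_replicateCol_mul_replicateRow] at hdet
    linarith
  have haa : (a ⬝ᵥ a) • c = 0 := by
    have h := congrArg (· *ᵥ a) horth
    simp only [← mulVec_mulVec, transpose_add, transpose_one, transpose_vecMulVec, add_mulVec,
      one_mulVec, vecMulVec_mulVec, hca, op_smul_eq_smul, zero_smul, add_zero] at h
    simpa using h
  exact (smul_eq_zero.mp haa).imp_left dotProduct_self_eq_zero.mp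

def TwinSolution (F G R : M3) (a n : V3) : Prop :=
  IsRot R ∧ a ≠ 0 ∧ n ⬝ᵥ n = 1 ∧ R * G - F = vecMulVec a n

def RankOneConnected (F G : M3) : Prop :=
  ∃ (R : M3) (a n : V3), TwinSolution F G R a n

lemma TwinSolution.symm {F G R : M3} {a n : V3} (h : TwinSolution F G R a n) :
    TwinSolution G F Rᵀ (-(Rᵀ *ᵥ a)) n := by
  obtain ⟨hR, ha, hn, heq⟩ := h
  refine ⟨hR.transpose, ?_, hn, ?_⟩
  · rw [neg_ne_zero]
    intro h0
    apply ha
    rw [← one_mulVec a, ← mul_eq_one_comm.mp hR.1, ← mulVec_mulVec, h0, mulVec_zero]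
  · have hF : F = R * G - vecMulVec a n := by rw [← heq, sub_sub_cancel]
    rw [hF, mul_sub, ← Matrix.mul_assoc, hR.1, Matrix.one_mul, mul_vecMulVec, neg_vecMulVec]
    abel

lemma TwinSolution.conj {F G R : M3} {a n : V3} (h : TwinSolution F G R a n) {Q : M3}
    (hQ : Qᵀ * Q = 1) :
    TwinSolution (Q * F * Qᵀ) (Q * G * Qᵀ) (Q * R * Qᵀ) (Q *ᵥ a) (Q *ᵥ n) := by
  obtain ⟨hR, ha, hn, heq⟩ := h
  refine ⟨hR.conj hQ, ?_, ?_, ?_⟩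
  · intro h0
    apply ha
    rw [← one_mulVec a, ← hQ, ← mulVec_mulVec, h0, mulVec_zero]
  · rw [dotProduct_mulVec, ← mulVec_transpose, mulVec_mulVec, hQ, one_mulVec, hn]
  · calc Q * R * Qᵀ * (Q * G * Qᵀ) - Q * F * Qᵀ = Q * (R * G - F) * Qᵀ := by
          simp only [mul_sub, sub_mul, Matrix.mul_assoc]
          rw [← Matrix.mul_assoc Qᵀ Q, hQ, Matrix.one_mul]
      _ = vecMulVec (Q *ᵥ a) (Q *ᵥ n) := by
          rw [heq, mul_vecMulVec, vecMulVec_mul, vecMul_transpose]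

lemma exists_twinSolution_smul {F G R : M3} {a n : V3} (hR : IsRot R) (ha : a ≠ 0) (hn : n ≠ 0)
    (h : R * G - F = vecMulVec a n) : ∃ c : ℝ, TwinSolution F G R (c⁻¹ • a) (c • n) := by
  have hnn : n ⬝ᵥ n ≠ 0 := dotProduct_self_eq_zero.not.mpr hn
  set s := √(n ⬝ᵥ n)
  have hs : s ^ 2 = n ⬝ᵥ n := Real.sq_sqrt (by simpa using dotProduct_self_star_nonneg n)
  have hs0 : s ≠ 0 := fun h0 => hnn (by rw [← hs, h0, zero_pow two_ne_zero])
  refine ⟨s⁻¹, hR, smul_ne_zero (inv_ne_zero (inv_ne_zero hs0)) ha, ?_, ?_⟩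
  · rw [smul_dotProduct, dotProduct_smul, smul_eq_mul, smul_eq_mul, ← hs]
    field_simp
  · rw [h, smul_vecMulVec, vecMulVec_smul, smul_smul, inv_inv, mul_inv_cancel₀ hs0, one_smul]

lemma not_rankOneConnected_of_transpose_mul_self_eq {F G : M3} (hF : IsUnit F.det)
    (hdet : G.det = F.det) (hC : Gᵀ * G = Fᵀ * F) : ¬ RankOneConnected F G := by
  rintro ⟨R, a, n, hR, ha, hn, heq⟩
  have hFF : F * F⁻¹ = 1 := F.mul_nonsing_inv hF
  have hU : R * G * F⁻¹ = 1 + vecMulVec a (n ᵥ* F⁻¹) := by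
    rw [sub_eq_iff_eq_add'.mp heq, add_mul, hFF, vecMulVec_mul]
  have hUrot : IsRot (R * G * F⁻¹) := by
    refine ⟨?_, ?_⟩
    · calc (R * G * F⁻¹)ᵀ * (R * G * F⁻¹) = F⁻¹ᵀ * (Gᵀ * (Rᵀ * R) * G) * F⁻¹ := by
            simp only [transpose_mul, Matrix.mul_assoc]
        _ = (F * F⁻¹)ᵀ * (F * F⁻¹) := by
            rw [hR.1, Matrix.mul_one, hC, transpose_mul]; simp only [Matrix.mul_assoc]
        _ = 1 := by rw [hFF, transpose_one, Matrix.one_mul]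
    · rw [det_mul, det_mul, hR.2, hdet, one_mul, ← det_mul, hFF, det_one]
  rw [hU] at hUrot
  rcases eq_zero_or_eq_zero_of_isRot_one_add_vecMulVec hUrot with h0 | h0
  · exact ha h0
  · rw [← vecMul_one n, ← F.nonsing_inv_mul hF, ← vecMul_vecMul, h0, zero_vecMul] at hn
    simp at hn

lemma not_rankOneConnected_Qpi_conj_of_mulVec_eq_smul {F : M3} (hF : IsUnit F.det) {e : V3}
    (he : e ⬝ᵥ e = 1) {μ : ℝ} (hμ : (Fᵀ * F) *ᵥ e = μ • e) :
    ¬ RankOneConnected F (Qpi e * F * Qpi e) := by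
  have hQQ : Qpi e * Qpi e = 1 := Qpi_mul_self he
  refine not_rankOneConnected_of_transpose_mul_self_eq hF (det_conj_of_mul_self_eq_one hQQ F) ?_
  have hC : Commute (Fᵀ * F) (Qpi e) := by
    rw [Qpi_eq_halfTurn he]
    exact commute_halfTurn_of_mulVec_eq_smul (isSymm_transpose_mul_self F) hμ
  calc (Qpi e * F * Qpi e)ᵀ * (Qpi e * F * Qpi e) = Qpi e * (Fᵀ * F) * Qpi e := by
        simp only [transpose_mul, Qpi_transpose, Matrix.mul_assoc]
        rw [← Matrix.mul_assoc (Qpi e) (Qpi e), hQQ, Matrix.one_mul]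
    _ = Fᵀ * F := by rw [← hC.eq, Matrix.mul_assoc, hQQ, Matrix.mul_one]

lemma halfTurn_mul_Qpi_mul_conj_sub {e : V3} (he : e ⬝ᵥ e = 1) (F : M3) (u : V3) :
    halfTurn u * Qpi e * (Qpi e * F * Qpi e) - F =
      (2 / (u ⬝ᵥ u)) • vecMulVec u (Qpi e *ᵥ (Fᵀ *ᵥ u)) - (2 : ℝ) • vecMulVec (F *ᵥ e) e := by
  have hQ : halfTurn u * Qpi e * (Qpi e * F * Qpi e) = halfTurn u * F * Qpi e := by
    simp only [Matrix.mul_assoc]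
    rw [← Matrix.mul_assoc (Qpi e) (Qpi e), Qpi_mul_self he, Matrix.one_mul]
  have hFQ : F * Qpi e = (2 : ℝ) • vecMulVec (F *ᵥ e) e - F := by
    rw [Qpi, mul_sub, mul_smul_comm, mul_vecMulVec, Matrix.mul_one]
  rw [hQ, halfTurn, sub_mul, sub_mul, Matrix.one_mul, hFQ, smul_mul_assoc, smul_mul_assoc,
    vecMulVec_mul, vecMulVec_mul, ← mulVec_transpose, ← mulVec_transpose, Qpi_transpose,
    mulVec_mulVec]
  abel

lemma exists_twinSolution_typeI {F : M3} (hF : IsUnit F.det) {e : V3} (he : e ⬝ᵥ e = 1)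
    (hc : RankOneConnected F (Qpi e * F * Qpi e)) :
    ∃ a, TwinSolution F (Qpi e * F * Qpi e) (halfTurn (F⁻¹ᵀ *ᵥ e) * Qpi e) a e := by
  set g := F⁻¹ᵀ *ᵥ e with hg_def
  have hg : Fᵀ *ᵥ g = e := by
    rw [hg_def, mulVec_mulVec, ← transpose_mul, F.nonsing_inv_mul hF, transpose_one, one_mulVec]
  have hg0 : g ≠ 0 := fun h => by simp [← hg, h] at he
  refine ⟨(2 / (g ⬝ᵥ g)) • g - (2 : ℝ) • (F *ᵥ e), (isRot_halfTurn hg0).mul (isRot_Qpi he), ?_,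
    he, ?_⟩
  · intro ha
    refine not_rankOneConnected_Qpi_conj_of_mulVec_eq_smul hF he (μ := (g ⬝ᵥ g)⁻¹) ?_ hc
    have hFe : F *ᵥ e = (g ⬝ᵥ g)⁻¹ • g := (smul_right_inj (two_ne_zero : (2 : ℝ) ≠ 0)).mp <| by
      rw [← sub_eq_zero.mp ha, smul_smul, div_eq_mul_inv]
    rw [← mulVec_mulVec, hFe, mulVec_smul, hg]
  · rw [halfTurn_mul_Qpi_mul_conj_sub he, hg, Qpi_mulVec_self he, sub_vecMulVec, smul_vecMulVec,
      smul_vecMulVec]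

lemma exists_twinSolution_typeII {F : M3} (hF : IsUnit F.det) {e : V3} (he : e ⬝ᵥ e = 1)
    (hc : RankOneConnected F (Qpi e * F * Qpi e)) :
    ∃ a n, TwinSolution F (Qpi e * F * Qpi e) (halfTurn (F *ᵥ e) * Qpi e) a n ∧ n ⬝ᵥ e = 0 := by
  set p := F *ᵥ e with hp_def
  have hp0 : p ≠ 0 := fun h => by
    have : e = F⁻¹ *ᵥ p := by rw [hp_def, mulVec_mulVec, F.nonsing_inv_mul hF, one_mulVec]
    simp [this, h] at he
  have hpp : p ⬝ᵥ p ≠ 0 := dotProduct_self_eq_zero.not.mpr hp0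
  set k := (2 / (p ⬝ᵥ p)) • (Qpi e *ᵥ (Fᵀ *ᵥ p)) - (2 : ℝ) • e with hk_def
  have hke : k ⬝ᵥ e = 0 := by
    rw [hk_def, sub_dotProduct, smul_dotProduct, smul_dotProduct, Qpi_mulVec_dotProduct,
      Qpi_mulVec_self he, mulVec_transpose, ← dotProduct_mulVec, ← hp_def, he, smul_eq_mul,
      smul_eq_mul, div_mul_cancel₀ _ hpp]
    norm_num
  have hk0 : k ≠ 0 := by
    intro hk
    refine not_rankOneConnected_Qpi_conj_of_mulVec_eq_smul hF he (μ := p ⬝ᵥ p) ?_ hc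
    have h1 : Qpi e *ᵥ (Fᵀ *ᵥ p) = (p ⬝ᵥ p) • e := by
      ext i
      have := congrFun (sub_eq_zero.mp hk) i
      simp only [Pi.smul_apply, smul_eq_mul] at this ⊢
      field_simp at this
      linarith
    rw [← mulVec_mulVec, ← hp_def, ← one_mulVec (Fᵀ *ᵥ p), ← Qpi_mul_self he, ← mulVec_mulVec, h1,
      mulVec_smul, Qpi_mulVec_self he]
  have heq : halfTurn p * Qpi e * (Qpi e * F * Qpi e) - F = vecMulVec p k := by
    rw [halfTurn_mul_Qpi_mul_conj_sub he, vecMulVec_sub, vecMulVec_smul, vecMulVec_smul]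
  obtain ⟨c, hsol⟩ := exists_twinSolution_smul ((isRot_halfTurn hp0).mul (isRot_Qpi he)) hp0 hk0 heq
  exact ⟨_, _, hsol, by rw [smul_dotProduct, hke, smul_zero]⟩

lemma halfTurn_Qpi_cycle_eq_one {v₁ v₂ u w : V3} (hv₁ : v₁ ⬝ᵥ v₁ = 1) (hv₂ : v₂ ⬝ᵥ v₂ = 1)
    (hv : v₁ ⬝ᵥ v₂ = 0) (h : u ⬝ᵥ (Qpi v₁ *ᵥ w) = 0) :
    halfTurn u * Qpi v₁ * (halfTurn w * Qpi v₂) * (Qpi v₂ * (Qpi v₁ * halfTurn u) * Qpi v₂) *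
      (Qpi v₁ * (Qpi v₂ * halfTurn w) * Qpi v₁) = 1 := by
  have hconj : Qpi v₁ * halfTurn w * Qpi v₁ = halfTurn (Qpi v₁ *ᵥ w) := by
    simpa only [Qpi_transpose] using halfTurn_conj (Qpi_transpose_mul_self hv₁) w
  rw [crossing_cycle_eq_sq (Qpi_mul_self hv₂) (Qpi_commute hv₁ hv₂ hv), hconj,
    (halfTurn_commute h).mul_pow, sq, sq, halfTurn_mul_self, halfTurn_mul_self, one_mul]

theorem crossing_twin_compatibility_general
    (F₁ : M3) (hF₁ : IsUnit F₁.det)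
    (v₁ v₂ : V3) (hv₁ : v₁ ⬝ᵥ v₁ = 1) (hv₂ : v₂ ⬝ᵥ v₂ = 1) (hv : v₁ ⬝ᵥ v₂ = 0)
    (F₂ F₃ F₄ : M3)
    (hF₂ : F₂ = Qpi v₁ * F₁ * Qpi v₁)
    (hF₃ : F₃ = Qpi v₂ * F₂ * Qpi v₂)
    (hF₄ : F₄ = Qpi v₂ * F₁ * Qpi v₂)
    (h₁ : ∃ (R : M3) (a n : V3), IsRot R ∧ a ≠ 0 ∧ n ⬝ᵥ n = 1 ∧ R * F₂ - F₁ = vecMulVec a n)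
    (h₂ : ∃ (R : M3) (a n : V3), IsRot R ∧ a ≠ 0 ∧ n ⬝ᵥ n = 1 ∧ R * F₃ - F₂ = vecMulVec a n) :
    ∃ (R₁ R₂ R₃ R₄ : M3) (a₁ a₂ a₃ a₄ n₁ n₂ n₃ n₄ : V3),
      IsRot R₁ ∧ IsRot R₂ ∧ IsRot R₃ ∧ IsRot R₄ ∧
      a₁ ≠ 0 ∧ a₂ ≠ 0 ∧ a₃ ≠ 0 ∧ a₄ ≠ 0 ∧
      n₁ ⬝ᵥ n₁ = 1 ∧ n₂ ⬝ᵥ n₂ = 1 ∧ n₃ ⬝ᵥ n₃ = 1 ∧ n₄ ⬝ᵥ n₄ = 1 ∧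
      R₁ * F₂ - F₁ = vecMulVec a₁ n₁ ∧
      R₂ * F₃ - F₂ = vecMulVec a₂ n₂ ∧
      R₃ * F₄ - F₃ = vecMulVec a₃ n₃ ∧
      R₄ * F₁ - F₄ = vecMulVec a₄ n₄ ∧
      R₁ * R₂ * R₃ * R₄ = 1 ∧
      ∃ w : V3, w ≠ 0 ∧ n₁ ⬝ᵥ w = 0 ∧ n₂ ⬝ᵥ w = 0 ∧ n₃ ⬝ᵥ w = 0 ∧ n₄ ⬝ᵥ w = 0 := by
  have hF₂u : IsUnit F₂.det := by rwa [hF₂, det_conj_of_mul_self_eq_one (Qpi_mul_self hv₁)]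
  obtain ⟨a₁, t₁⟩ := exists_twinSolution_typeI hF₁ hv₁ (hF₂ ▸ h₁)
  obtain ⟨a₂, n₂, t₂, hn₂⟩ := exists_twinSolution_typeII hF₂u hv₂ (hF₃ ▸ h₂)
  rw [← hF₂] at t₁
  rw [← hF₃] at t₂
  have e₁ : Qpi v₁ * F₂ * Qpi v₁ = F₁ := by
    rw [hF₂, conj_conj_of_mul_self_eq_one (Qpi_mul_self hv₁)]
  have e₄ : Qpi v₁ * F₃ * Qpi v₁ = F₄ := by
    rw [hF₃, hF₂, hF₄, conj_conj_conj_of_commute (Qpi_mul_self hv₁) (Qpi_commute hv₁ hv₂ hv)]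
  have t₃ := t₁.symm.conj (Qpi_transpose_mul_self hv₂)
  have t₄ := t₂.symm.conj (Qpi_transpose_mul_self hv₁)
  simp only [transpose_mul, Qpi_transpose, halfTurn_transpose] at t₃ t₄
  rw [← hF₃, ← hF₄] at t₃
  rw [e₁, e₄] at t₄
  have horth : (F₁⁻¹ᵀ *ᵥ v₁) ⬝ᵥ (Qpi v₁ *ᵥ (F₂ *ᵥ v₂)) = 0 := by
    rw [hF₂, mulVec_mulVec, ← Matrix.mul_assoc, ← Matrix.mul_assoc, Qpi_mul_self hv₁,
      Matrix.one_mul, ← mulVec_mulVec, Qpi_mulVec_of_dotProduct_eq_zero hv, mulVec_neg,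
      dotProduct_neg, inv_transpose_mulVec_dotProduct_mulVec hF₁, hv, neg_zero]
  obtain ⟨hR₁, ha₁, hn₁, e₁⟩ := t₁
  obtain ⟨hR₂, ha₂, hn₂', e₂⟩ := t₂
  obtain ⟨hR₃, ha₃, hn₃, e₃⟩ := t₃
  obtain ⟨hR₄, ha₄, hn₄, e₄⟩ := t₄
  refine ⟨_, _, _, _, _, _, _, _, _, _, _, _, hR₁, hR₂, hR₃, hR₄, ha₁, ha₂, ha₃, ha₄, hn₁, hn₂',
    hn₃, hn₄, e₁, e₂, e₃, e₄, halfTurn_Qpi_cycle_eq_one hv₁ hv₂ hv horth, v₂,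
    fun h => by simp [h] at hv₂, hv, hn₂, ?_, ?_⟩
  · rw [Qpi_mulVec_dotProduct, Qpi_mulVec_self hv₂, hv]
  · rw [Qpi_mulVec_dotProduct, Qpi_mulVec_of_dotProduct_eq_zero hv, dotProduct_neg, hn₂, neg_zero]

/-- Crossing-twin compatibility (Bhattacharya et al., Theorem 2). -/
theorem crossing_twin_compatibility
    (F₁ : M3) (hF₁ : IsUnit F₁.det)
    (v₁ v₂ : V3) (hv₁ : v₁ ⬝ᵥ v₁ = 1) (hv₂ : v₂ ⬝ᵥ v₂ = 1) (hv : v₁ ⬝ᵥ v₂ = 0)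
    (F₂ F₃ F₄ : M3)
    (hF₂ : F₂ = Qpi v₁ * F₁ * Qpi v₁)
    (hF₃ : F₃ = Qpi v₂ * F₂ * Qpi v₂)
    (hF₄ : F₄ = Qpi v₂ * F₁ * Qpi v₂)
    (h₁ : ∃ (R : M3) (a n : V3), IsRot R ∧ a ≠ 0 ∧ n ⬝ᵥ n = 1 ∧ R * F₂ - F₁ = vecMulVec a n)
    (h₂ : ∃ (R : M3) (a n : V3), IsRot R ∧ a ≠ 0 ∧ n ⬝ᵥ n = 1 ∧ R * F₃ - F₂ = vecMulVec a n)
    (h₃ : ∃ (R : M3) (a n : V3), IsRot R ∧ a ≠ 0 ∧ n ⬝ᵥ n = 1 ∧ R * F₄ - F₃ = vecMulVec a n)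
    (h₄ : ∃ (R : M3) (a n : V3), IsRot R ∧ a ≠ 0 ∧ n ⬝ᵥ n = 1 ∧ R * F₁ - F₄ = vecMulVec a n) :
    ∃ (R₁ R₂ R₃ R₄ : M3) (a₁ a₂ a₃ a₄ n₁ n₂ n₃ n₄ : V3),
      IsRot R₁ ∧ IsRot R₂ ∧ IsRot R₃ ∧ IsRot R₄ ∧
      a₁ ≠ 0 ∧ a₂ ≠ 0 ∧ a₃ ≠ 0 ∧ a₄ ≠ 0 ∧
      n₁ ⬝ᵥ n₁ = 1 ∧ n₂ ⬝ᵥ n₂ = 1 ∧ n₃ ⬝ᵥ n₃ = 1 ∧ n₄ ⬝ᵥ n₄ = 1 ∧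
      R₁ * F₂ - F₁ = vecMulVec a₁ n₁ ∧
      R₂ * F₃ - F₂ = vecMulVec a₂ n₂ ∧
      R₃ * F₄ - F₃ = vecMulVec a₃ n₃ ∧
      R₄ * F₁ - F₄ = vecMulVec a₄ n₄ ∧
      R₁ * R₂ * R₃ * R₄ = 1 ∧
      ∃ w : V3, w ≠ 0 ∧ n₁ ⬝ᵥ w = 0 ∧ n₂ ⬝ᵥ w = 0 ∧ n₃ ⬝ᵥ w = 0 ∧ n₄ ⬝ᵥ w = 0 :=
  crossing_twin_compatibility_general F₁ hF₁ v₁ v₂ hv₁ hv₂ hv F₂ F₃ F₄ hF₂ hF₃ hF₄ h₁ h₂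
end
end

section
/- Let p̂₅ = (−e₁+e₂)/√2, p̂₆ = (e₁+e₂)/√2, p̂₃ = (−e₁+e₃)/√2, p̂₄ = (e₁+e₃)/√2, and let n₁ = e₁, n₃ = −e₁, and n₂, n₄ unit vectors satisfying n₄·e₃ = n₂·e₂, n₄·e₂ = n₂·e₃, n₂·e₃ = −n₂·e₂, and n₂·e₁ = n₄·e₁ = 0. Then with the sign choices p₅ = p̂₅, p₆ = −p̂₆, p₃ = p̂₃, p₄ = −p̂₄, all four interface jump conditions hold: (p₅ − p₆)·n₁ = 0, (p₆ − p₃)·n₂ = 0, (p₃ − p₄)·n₃ = 0, (p₄ − p₅)·n₄ = 0. -/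
/-! Each jump `p_A - p_B` is `±(p̂_A + p̂_B)`, and the two variants meeting at an interface are
mirror images under `e₁ ↦ -e₁`, so their `e₁`-components cancel. The jumps across `n₁ = e₁` and
`n₃ = -e₁` are multiples of `e₂` and `e₃`, hence orthogonal to `e₁`; the jumps across `n₂` and `n₄`
are multiples of `e₂ + e₃`, which the constraints on `n₂, n₄` make orthogonal to both normals. -/

open Matrix

noncomputable section

theorem smul_neg_add_add_smul_add {R M : Type*} [Monoid R] [AddCommGroup M]
    [DistribMulAction R M] (c : R) (a b d : M) :
    c • (-a + b) + c • (a + d) = c • (b + d) := by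
  rw [← smul_add, add_add_add_comm, neg_add_cancel, zero_add]

theorem add_dotProduct_eq_zero_of_dotProduct_eq_neg {R ι : Type*} [CommRing R] [Fintype ι]
    {u v n : ι → R} (h : n ⬝ᵥ v = -(n ⬝ᵥ u)) : (u + v) ⬝ᵥ n = 0 := by
  rw [add_dotProduct, dotProduct_comm u, dotProduct_comm v, h, add_neg_cancel]

theorem crossing_twin_pole_free_interfaces_general
    (e₁ e₂ e₃ : V3) (he₁ : e₁ = ![1, 0, 0]) (he₂ : e₂ = ![0, 1, 0]) (he₃ : e₃ = ![0, 0, 1])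
    (phat₅ phat₆ phat₃ phat₄ : V3)
    (hp₅ : phat₅ = (Real.sqrt 2)⁻¹ • (-e₁ + e₂))
    (hp₆ : phat₆ = (Real.sqrt 2)⁻¹ • (e₁ + e₂))
    (hp₃ : phat₃ = (Real.sqrt 2)⁻¹ • (-e₁ + e₃))
    (hp₄ : phat₄ = (Real.sqrt 2)⁻¹ • (e₁ + e₃))
    (n₁ n₂ n₃ n₄ : V3) (hn₁ : n₁ = e₁) (hn₃ : n₃ = -e₁)
    (h42 : n₄ ⬝ᵥ e₃ = n₂ ⬝ᵥ e₂) (h42' : n₄ ⬝ᵥ e₂ = n₂ ⬝ᵥ e₃)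
    (h2 : n₂ ⬝ᵥ e₃ = -(n₂ ⬝ᵥ e₂)) :
    let p₅ := phat₅
    let p₆ := -phat₆
    let p₃ := phat₃
    let p₄ := -phat₄
    (p₅ - p₆) ⬝ᵥ n₁ = 0 ∧ (p₆ - p₃) ⬝ᵥ n₂ = 0 ∧
    (p₃ - p₄) ⬝ᵥ n₃ = 0 ∧ (p₄ - p₅) ⬝ᵥ n₄ = 0 := by
  dsimp only
  have he₂₁ : (e₂ + e₂) ⬝ᵥ e₁ = 0 := by
    subst he₁ he₂; simp [dotProduct, Fin.sum_univ_three]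
  have he₃₁ : (e₃ + e₃) ⬝ᵥ e₁ = 0 := by
    subst he₁ he₃; simp [dotProduct, Fin.sum_univ_three]
  have hn₂ : (e₃ + e₂) ⬝ᵥ n₂ = 0 :=
    add_dotProduct_eq_zero_of_dotProduct_eq_neg (by rw [h2, neg_neg])
  have hn₄ : (e₂ + e₃) ⬝ᵥ n₄ = 0 :=
    add_dotProduct_eq_zero_of_dotProduct_eq_neg (by rw [h42, h42', h2, neg_neg])
  refine ⟨?_, ?_, ?_, ?_⟩
  · rw [sub_neg_eq_add, hp₅, hp₆, smul_neg_add_add_smul_add, smul_dotProduct, hn₁, he₂₁,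
      smul_zero]
  · rw [neg_sub_left, hp₃, hp₆, smul_neg_add_add_smul_add, neg_dotProduct, smul_dotProduct, hn₂,
      smul_zero, neg_zero]
  · rw [sub_neg_eq_add, hp₃, hp₄, smul_neg_add_add_smul_add, smul_dotProduct, hn₃,
      dotProduct_neg, he₃₁, neg_zero, smul_zero]
  · rw [neg_sub_left, hp₅, hp₄, smul_neg_add_add_smul_add, neg_dotProduct, smul_dotProduct, hn₄,
      smul_zero, neg_zero]

theorem crossing_twin_pole_free_interfaces
    (e₁ e₂ e₃ : V3) (he₁ : e₁ = ![1, 0, 0]) (he₂ : e₂ = ![0, 1, 0]) (he₃ : e₃ = ![0, 0, 1])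
    (phat₅ phat₆ phat₃ phat₄ : V3)
    (hp₅ : phat₅ = (Real.sqrt 2)⁻¹ • (-e₁ + e₂))
    (hp₆ : phat₆ = (Real.sqrt 2)⁻¹ • (e₁ + e₂))
    (hp₃ : phat₃ = (Real.sqrt 2)⁻¹ • (-e₁ + e₃))
    (hp₄ : phat₄ = (Real.sqrt 2)⁻¹ • (e₁ + e₃))
    (n₁ n₂ n₃ n₄ : V3) (hn₁ : n₁ = e₁) (hn₃ : n₃ = -e₁)
    (hn₂unit : n₂ ⬝ᵥ n₂ = 1) (hn₄unit : n₄ ⬝ᵥ n₄ = 1)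
    (h42 : n₄ ⬝ᵥ e₃ = n₂ ⬝ᵥ e₂) (h42' : n₄ ⬝ᵥ e₂ = n₂ ⬝ᵥ e₃)
    (h2 : n₂ ⬝ᵥ e₃ = -(n₂ ⬝ᵥ e₂))
    (h2e₁ : n₂ ⬝ᵥ e₁ = 0) (h4e₁ : n₄ ⬝ᵥ e₁ = 0) :
    let p₅ := phat₅
    let p₆ := -phat₆
    let p₃ := phat₃
    let p₄ := -phat₄
    (p₅ - p₆) ⬝ᵥ n₁ = 0 ∧ (p₆ - p₃) ⬝ᵥ n₂ = 0 ∧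
    (p₃ - p₄) ⬝ᵥ n₃ = 0 ∧ (p₄ - p₅) ⬝ᵥ n₄ = 0 :=
  crossing_twin_pole_free_interfaces_general e₁ e₂ e₃ he₁ he₂ he₃ phat₅ phat₆ phat₃ phat₄ hp₅ hp₆
    hp₃ hp₄ n₁ n₂ n₃ n₄ hn₁ hn₃ h42 h42' h2
end
end
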